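/- Every non-increasing sequence of nonnegative integers is realized as a Thom–Boardman symbol: for every function s : ℕ → ℕ with s_{p+1} ≤ s_p for all p, there exist m ≥ 0 and a proper ideal J ⊆ 𝒜_m such that the p-th entry of TB(J) equals s_p for every p. (Note that every non-increasing sequence of nonnegative integers is eventually constant.) -/

import Mathlib

open MvPowerSeries

/-- `𝒜 m` : formal power series in `m` variables over `ℂ`, the algebraic model for the
local ring of germs of differentiable functions at the origin of `ℂ^m`. -/
abbrev Amod (m : ℕ) : Type := MvPowerSeries (Fin m) ℂ

/-- Formal partial derivative `∂/∂x_j` of a multivariate power series. -/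
noncomputable def pd {m : ℕ} (j : Fin m) (φ : Amod m) : Amod m :=
  fun e => ((e j + 1 : ℕ) : ℂ) * MvPowerSeries.coeff (e + Finsupp.single j 1) φ

/-- The differential at the origin: the vector of degree-one coefficients. -/
noncomputable def diffAtZero {m : ℕ} (φ : Amod m) : Fin m → ℂ :=
  fun j => MvPowerSeries.coeff (Finsupp.single j 1) φ

/-- The rank of an ideal `B ⊆ 𝒜 m`: the dimension of the `ℂ`-linear span of the
differentials at `0` of the elements of `B`. -/
noncomputable def rankIdeal {m : ℕ} (B : Ideal (Amod m)) : ℕ :=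
  Module.finrank ℂ (Submodule.span ℂ (diffAtZero '' (B : Set (Amod m))))

/-- The corank of an ideal `B ⊆ 𝒜 m`. -/
noncomputable def corankIdeal {m : ℕ} (B : Ideal (Amod m)) : ℕ := m - rankIdeal B

/-- The Jacobian extension `Δ_k B` (lower index): the ideal generated by `B` together with
all `k × k` minors of Jacobian matrices of `k`-tuples of elements of `B`; for `k > m` it
is `B` itself. -/
noncomputable def jacExt {m : ℕ} (k : ℕ) (B : Ideal (Amod m)) : Ideal (Amod m) :=
  if m < k then B
  else B ⊔ Ideal.span { f | ∃ φ : Fin k → Amod m, (∀ i, φ i ∈ B) ∧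
    ∃ j : Fin k → Fin m, StrictMono j ∧
      f = Matrix.det (Matrix.of fun i l => pd (j l) (φ i)) }

/-- Jacobian extension with upper index: `Δ^i B = Δ_{m-i+1} B`. -/
noncomputable def jacExtUpper {m : ℕ} (i : ℕ) (B : Ideal (Amod m)) : Ideal (Amod m) :=
  jacExt (m - i + 1) B

/-- The iterated critical extensions `TBiter J p = Δ^{i_p} ⋯ Δ^{i_1} J`. -/
noncomputable def TBiter {m : ℕ} (J : Ideal (Amod m)) : ℕ → Ideal (Amod m)
  | 0 => J
  | p + 1 => jacExtUpper (corankIdeal (TBiter J p)) (TBiter J p)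

/-- The Thom–Boardman symbol, `0`-indexed: `TB J p` is the `(p+1)`-st entry `i_{p+1}`,
i.e. `TB J 0 = corank J` and `TB J p = corank (Δ^{i_p} ⋯ Δ^{i_1} J)`. -/
noncomputable def TB {m : ℕ} (J : Ideal (Amod m)) (p : ℕ) : ℕ :=
  corankIdeal (TBiter J p)

/-- Coefficient `a_i` of the generic monic polynomial of degree `n`
(the first block of `n` variables of `𝒜 (n+r)`), with `a_n = 1` and `a_i = 0` for `i > n`. -/
noncomputable def aCoef (n r i : ℕ) : Amod (n + r) :=
  if h : i < n then MvPowerSeries.X (Fin.castAdd r ⟨i, h⟩)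
  else if i = n then 1 else 0

/-- Coefficient `b_j` of the generic monic polynomial of degree `r`
(the last block of `r` variables of `𝒜 (n+r)`), with `b_r = 1` and `b_j = 0` for `j > r`. -/
noncomputable def bCoef (n r j : ℕ) : Amod (n + r) :=
  if h : j < r then MvPowerSeries.X (Fin.natAdd n ⟨j, h⟩)
  else if j = r then 1 else 0

/-- Coefficient `c_k` of the product `(x^n + Σ_{i<n} a_i x^i) (x^r + Σ_{j<r} b_j x^j)`. -/
noncomputable def cCoef (n r k : ℕ) : Amod (n + r) :=
  ∑ p ∈ Finset.HasAntidiagonal.antidiagonal k, aCoef n r p.1 * bCoef n r p.2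

/-- The ideal `I(μ_{n,r}) ⊆ 𝒜 (n+r)` of the polynomial multiplication map `μ_{n,r}`,
generated by `c_0, …, c_{n+r-1}`. -/
noncomputable def muIdeal (n r : ℕ) : Ideal (Amod (n + r)) :=
  Ideal.span (Set.range fun k : Fin (n + r) => cCoef n r (k : ℕ))

/-- The sequence `I(n,r)` given by the Euclidean algorithm on `n` and `r` (0-indexed):
`r` repeated `n / r` times, then `r₁ = n % r` repeated `r / r₁` times, …, followed by zeros. -/
def euclidSeq (n r p : ℕ) : ℕ :=
  if h : r = 0 then 0
  else if p < n / r then r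
  else euclidSeq r (n % r) (p - n / r)
termination_by r
decreasing_by exact Nat.mod_lt _ (Nat.pos_of_ne_zero h)

/-- The `ℂ`-algebra embedding `𝒜 m₁ → 𝒜 (m₁+m₂)` using the first `m₁` variables. -/
noncomputable def embL {m₁ m₂ : ℕ} (φ : Amod m₁) : Amod (m₁ + m₂) :=
  fun e =>
    if ∀ j : Fin m₂, e (Fin.natAdd m₁ j) = 0 then
      MvPowerSeries.coeff (Finsupp.equivFunOnFinite.symm fun i => e (Fin.castAdd m₂ i)) φ
    else 0

/-- The `ℂ`-algebra embedding `𝒜 m₂ → 𝒜 (m₁+m₂)` using the last `m₂` variables. -/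
noncomputable def embR {m₁ m₂ : ℕ} (φ : Amod m₂) : Amod (m₁ + m₂) :=
  fun e =>
    if ∀ i : Fin m₁, e (Fin.castAdd m₂ i) = 0 then
      MvPowerSeries.coeff (Finsupp.equivFunOnFinite.symm fun j => e (Fin.natAdd m₁ j)) φ
    else 0

/-- The product ideal `J₁ ⊞ J₂ ⊆ 𝒜 (m₁+m₂)`, generated by the images of `J₁` and `J₂`
under the two embeddings; it models the ideal of the Cartesian product of two map-germs. -/
noncomputable def prodIdeal {m₁ m₂ : ℕ} (J₁ : Ideal (Amod m₁)) (J₂ : Ideal (Amod m₂)) :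
    Ideal (Amod (m₁ + m₂)) :=
  Ideal.span (embL '' (J₁ : Set (Amod m₁)) ∪ embR '' (J₂ : Set (Amod m₂)))

/-!
Take a monomial ideal `(x_j ^ b_j)`. Its rank counts the exponents equal to `1`, and the
Jacobian extension `Δ_{rank+1}` lowers every exponent `≥ 2` by one and keeps the others: a minor
with more columns than there are linear generators differentiates by some `x_i` with `b_i ≠ 1`,
which maps the ideal into the lowered one, while the diagonal minor on the columns
`{i | b_i = 1} ∪ {j}` is `b_j x_j ^ (b_j - 1)`. So the `p`-th entry of the Thom–Boardman symbol
counts the variables whose exponent has not reached `1` after `p` lowerings. Giving `x_j`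
(`j < s_0`) the exponent one more than the first `p` with `s_p ≤ j`, and no generator if there
is none, makes this count `s_p`.
-/

open Finset

theorem MvPowerSeries.pderiv_X_pow {σ R : Type*} [CommSemiring R] [DecidableEq σ]
    (i j : σ) (n : ℕ) :
    pderiv R i (X j ^ n : MvPowerSeries σ R) =
      if i = j then (n : MvPowerSeries σ R) * X j ^ (n - 1) else 0 := by
  rw [pderiv_pow, pderiv_X]
  split_ifs with h
  · subst h; simp
  · simp [Ne.symm h]

theorem Matrix.det_mem_of_forall_mem_col {n R : Type*} [Fintype n] [DecidableEq n] [CommRing R]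
    (A : Matrix n n R) (I : Ideal R) (l : n) (h : ∀ i, A i l ∈ I) : A.det ∈ I := by
  rw [Matrix.det_apply]
  refine sum_mem fun σ _ => ?_
  rw [Units.smul_def]
  refine zsmul_mem ?_ _
  exact I.mem_of_dvd (dvd_prod_of_mem _ (mem_univ l)) (h _)

section PowerSeries

variable {m : ℕ}

theorem pd_eq_pderiv (j : Fin m) (φ : Amod m) : pd j φ = pderiv ℂ j φ := by
  ext e
  rw [coeff_pderiv]
  change ((e j + 1 : ℕ) : ℂ) * _ = _
  push_cast
  ring

theorem constantCoeff_X_pow_of_ne_zero (j : Fin m) {n : ℕ} (hn : n ≠ 0) :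
    constantCoeff (X j ^ n : Amod m) = 0 := by
  simp [hn]

theorem diffAtZero_apply (φ : Amod m) (j : Fin m) :
    diffAtZero φ j = constantCoeff (pderiv ℂ j φ) := by
  rw [← coeff_zero_eq_constantCoeff_apply, coeff_pderiv]
  simp [diffAtZero]

theorem diffAtZero_zero : diffAtZero (0 : Amod m) = 0 := by
  ext j
  simp [diffAtZero]

theorem diffAtZero_add (φ ψ : Amod m) : diffAtZero (φ + ψ) = diffAtZero φ + diffAtZero ψ := by
  ext j
  simp [diffAtZero_apply]

theorem diffAtZero_mul_of_constantCoeff_eq_zero (a : Amod m) {φ : Amod m}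
    (hφ : constantCoeff φ = 0) : diffAtZero (a * φ) = constantCoeff a • diffAtZero φ := by
  ext j
  simp [diffAtZero_apply, hφ]

theorem diffAtZero_X (j : Fin m) : diffAtZero (X j : Amod m) = Pi.single j 1 := by
  ext i
  simp [diffAtZero_apply, pderiv_X, Pi.single_apply, eq_comm]

theorem diffAtZero_X_pow_of_ne_one (j : Fin m) {n : ℕ} (hn : n ≠ 1) :
    diffAtZero (X j ^ n : Amod m) = 0 := by
  ext i
  rw [diffAtZero_apply, pderiv_X_pow]
  split_ifs
  · rcases Nat.lt_or_gt_of_ne hn with h | h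
    · simp [Nat.lt_one_iff.mp h]
    · simp [zero_pow (Nat.sub_ne_zero_of_lt h)]
  · simp

/-- By Leibniz' rule at `0`, `d(a φ) = a(0) dφ` once `φ(0) = 0`. -/
theorem span_diffAtZero_span {S : Set (Amod m)} (hS : ∀ φ ∈ S, constantCoeff φ = 0) :
    Submodule.span ℂ (diffAtZero '' (Ideal.span S : Set (Amod m))) =
      Submodule.span ℂ (diffAtZero '' S) := by
  refine le_antisymm (Submodule.span_le.mpr ?_)
    (Submodule.span_mono (Set.image_mono Ideal.subset_span))
  rintro _ ⟨φ, hφ, rfl⟩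
  induction hφ using Submodule.span_induction with
  | mem φ hφ => exact Submodule.subset_span ⟨φ, hφ, rfl⟩
  | zero => exact diffAtZero_zero (m := m) ▸ Submodule.zero_mem _
  | add φ ψ _ _ hφ hψ => rw [diffAtZero_add]; exact add_mem hφ hψ
  | smul a φ hφS hφ =>
    have h0 : constantCoeff φ = 0 := RingHom.mem_ker.mp <|
      (Ideal.span_le (I := RingHom.ker constantCoeff)).mpr (fun ψ hψ => hS ψ hψ) hφS
    rw [smul_eq_mul, diffAtZero_mul_of_constantCoeff_eq_zero a h0]
    exact Submodule.smul_mem _ _ hφ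

theorem rankIdeal_le (B : Ideal (Amod m)) : rankIdeal B ≤ m :=
  (Submodule.finrank_le _).trans (by simp)

theorem jacExtUpper_corankIdeal (B : Ideal (Amod m)) :
    jacExtUpper (corankIdeal B) B = jacExt (rankIdeal B + 1) B := by
  rw [jacExtUpper, corankIdeal, Nat.sub_sub_self (rankIdeal_le B)]

end PowerSeries

section MonomialIdeal

variable {m : ℕ}

/-- An exponent `0` contributes no generator. -/
noncomputable def monomialIdeal (b : Fin m → ℕ) : Ideal (Amod m) :=
  Ideal.span ((fun j => X j ^ b j) '' {j | b j ≠ 0})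

theorem X_pow_mem_monomialIdeal {b : Fin m → ℕ} {j : Fin m} {n : ℕ} (hj : b j ≠ 0)
    (hn : b j ≤ n) : (X j ^ n : Amod m) ∈ monomialIdeal b :=
  Ideal.mem_of_dvd _ (pow_dvd_pow _ hn) (Ideal.subset_span ⟨j, hj, rfl⟩)

theorem monomialIdeal_le_ker_constantCoeff (b : Fin m → ℕ) :
    monomialIdeal b ≤ RingHom.ker constantCoeff := by
  refine Ideal.span_le.mpr ?_
  rintro _ ⟨j, hj, rfl⟩
  exact constantCoeff_X_pow_of_ne_zero j hj

theorem monomialIdeal_ne_top (b : Fin m → ℕ) : monomialIdeal b ≠ ⊤ :=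
  ne_top_of_le_ne_top (RingHom.ker_ne_top _) (monomialIdeal_le_ker_constantCoeff b)

theorem span_diffAtZero_monomialIdeal (b : Fin m → ℕ) :
    Submodule.span ℂ (diffAtZero '' (monomialIdeal b : Set (Amod m))) =
      Submodule.span ℂ (Set.range fun j : {j // b j = 1} => Pi.single (j : Fin m) (1 : ℂ)) := by
  have hgen : ∀ φ ∈ (fun j => (X j ^ b j : Amod m)) '' {j | b j ≠ 0},
      constantCoeff φ = 0 := by
    rintro _ ⟨j, hj, rfl⟩
    exact constantCoeff_X_pow_of_ne_zero j hj
  rw [monomialIdeal, span_diffAtZero_span hgen, Set.image_image]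
  apply le_antisymm
  · refine Submodule.span_le.mpr ?_
    rintro _ ⟨j, -, rfl⟩
    dsimp only
    by_cases h : b j = 1
    · rw [h, pow_one, diffAtZero_X]
      exact Submodule.subset_span ⟨⟨j, h⟩, rfl⟩
    · rw [diffAtZero_X_pow_of_ne_one j h]
      exact Submodule.zero_mem _
  · refine Submodule.span_mono ?_
    rintro _ ⟨⟨j, h⟩, rfl⟩
    exact ⟨j, by simp [h], by simp [h, diffAtZero_X]⟩

theorem rankIdeal_monomialIdeal (b : Fin m → ℕ) :
    rankIdeal (monomialIdeal b) = #{j | b j = 1} := by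
  rw [rankIdeal, span_diffAtZero_monomialIdeal, ← Fintype.card_subtype]
  exact finrank_span_eq_card
    ((Pi.linearIndependent_single_one (Fin m) ℂ).comp _ Subtype.val_injective)

end MonomialIdeal

def predUnlessOne (n : ℕ) : ℕ := if n = 1 then 1 else n - 1

theorem predUnlessOne_le (n : ℕ) : predUnlessOne n ≤ n := by
  unfold predUnlessOne
  split_ifs <;> omega

theorem predUnlessOne_eq_zero_iff {n : ℕ} : predUnlessOne n = 0 ↔ n = 0 := by
  grind [predUnlessOne]

theorem predUnlessOne_iterate_succ (n p : ℕ) : predUnlessOne^[p] (n + 1) = n - p + 1 := by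
  induction p with
  | zero => rfl
  | succ p ih =>
    rw [Function.iterate_succ_apply', ih]
    grind [predUnlessOne]

section Jacobian

variable {m : ℕ}

theorem le_jacExt (k : ℕ) (B : Ideal (Amod m)) : B ≤ jacExt k B := by
  unfold jacExt
  split_ifs
  exacts [le_rfl, le_sup_left]

theorem monomialIdeal_le_monomialIdeal_predUnlessOne (b : Fin m → ℕ) :
    monomialIdeal b ≤ monomialIdeal (predUnlessOne ∘ b) := by
  refine Ideal.span_le.mpr ?_
  rintro _ ⟨j, hj, rfl⟩
  exact X_pow_mem_monomialIdeal (predUnlessOne_eq_zero_iff.not.mpr hj) (predUnlessOne_le _)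

theorem pderiv_mem_monomialIdeal_predUnlessOne {b : Fin m → ℕ} {i : Fin m} (hi : b i ≠ 1)
    {φ : Amod m} (hφ : φ ∈ monomialIdeal b) :
    pderiv ℂ i φ ∈ monomialIdeal (predUnlessOne ∘ b) := by
  induction hφ using Submodule.span_induction with
  | mem φ hφ =>
    obtain ⟨j, hj, rfl⟩ := hφ
    rw [pderiv_X_pow]
    split_ifs with hij
    · subst hij
      have hj : b i ≠ 0 := hj
      have h : (predUnlessOne ∘ b) i = b i - 1 := if_neg hi
      exact Ideal.mul_mem_left _ _ (X_pow_mem_monomialIdeal (by omega) h.le)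
    · exact zero_mem _
  | zero => simp
  | add φ ψ _ _ hφ hψ => rw [map_add]; exact add_mem hφ hψ
  | smul a φ hφb hφ =>
    rw [smul_eq_mul, Derivation.leibniz, smul_eq_mul, smul_eq_mul]
    exact add_mem (Ideal.mul_mem_left _ _ hφ)
      (Ideal.mul_mem_right _ _ (monomialIdeal_le_monomialIdeal_predUnlessOne b hφb))

theorem det_jacobian_mem_monomialIdeal_predUnlessOne {b : Fin m → ℕ} {k : ℕ}
    (hk : #{j | b j = 1} < k) (φ : Fin k → Amod m) (hφ : ∀ i, φ i ∈ monomialIdeal b)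
    (col : Fin k → Fin m) (hcol : Function.Injective col) :
    (Matrix.of fun i l => pd (col l) (φ i)).det ∈ monomialIdeal (predUnlessOne ∘ b) := by
  obtain ⟨l, hl⟩ : ∃ l, b (col l) ≠ 1 := by
    by_contra! h
    have := card_le_card_of_injOn col (s := univ) (t := {j | b j = 1})
      (fun l _ => by simp [h l]) hcol.injOn
    simp only [card_univ, Fintype.card_fin] at this
    omega
  refine Matrix.det_mem_of_forall_mem_col _ _ l fun i => ?_
  rw [Matrix.of_apply, pd_eq_pderiv]
  exact pderiv_mem_monomialIdeal_predUnlessOne hl (hφ i)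

theorem det_jacobian_X_pow {k : ℕ} (col : Fin k → Fin m) (hcol : Function.Injective col)
    (n : Fin m → ℕ) :
    (Matrix.of fun i l => pd (col l) (X (col i) ^ n (col i))).det =
      ∏ i, (n (col i) : Amod m) * X (col i) ^ (n (col i) - 1) := by
  have hdiag : (Matrix.of fun i l => pd (col l) (X (col i) ^ n (col i))) =
      Matrix.diagonal fun i => (n (col i) : Amod m) * X (col i) ^ (n (col i) - 1) := by
    refine Matrix.ext fun i l => ?_
    simp only [Matrix.of_apply, Matrix.diagonal_apply, pd_eq_pderiv, pderiv_X_pow, hcol.eq_iff,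
      eq_comm (a := l)]
  rw [hdiag, Matrix.det_diagonal]

theorem X_pow_pred_mem_jacExt {b : Fin m → ℕ} {j : Fin m} (hj : 2 ≤ b j) :
    (X j ^ (b j - 1) : Amod m) ∈ jacExt (#{i | b i = 1} + 1) (monomialIdeal b) := by
  set T : Finset (Fin m) := {i | b i = 1}
  have hjT : j ∉ T := by
    simp only [T, mem_filter, mem_univ, true_and]
    omega
  have hcard : #(insert j T) = #T + 1 := card_insert_of_notMem hjT
  have hk : ¬ m < #T + 1 := by
    have := card_le_univ (insert j T)
    simp only [Fintype.card_fin] at this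
    omega
  let col := (insert j T).orderEmbOfFin hcard
  have hdet : (Matrix.of fun i l => pd (col l) (X (col i) ^ b (col i))).det =
      (b j : Amod m) * X j ^ (b j - 1) := by
    rw [det_jacobian_X_pow col col.injective,
      ← prod_image (f := fun x => (b x : Amod m) * X x ^ (b x - 1)) col.injective.injOn,
      image_orderEmbOfFin_univ, prod_insert hjT, prod_eq_one, mul_one]
    intro i hi
    simp only [T, mem_filter, mem_univ, true_and] at hi
    simp [hi]
  have hminor : (b j : Amod m) * X j ^ (b j - 1) ∈ jacExt (#T + 1) (monomialIdeal b) := by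
    rw [jacExt, if_neg hk, ← hdet]
    refine Ideal.mem_sup_right (Ideal.subset_span ⟨_, fun i => ?_, col, col.strictMono, rfl⟩)
    have hi : col i ∈ insert j T := orderEmbOfFin_mem _ hcard i
    simp only [T, mem_insert, mem_filter, mem_univ, true_and] at hi
    exact X_pow_mem_monomialIdeal (by rcases hi with hi | hi <;> simp only [hi] <;> omega) le_rfl
  have hunit : IsUnit (b j : Amod m) := by
    rw [MvPowerSeries.isUnit_iff_constantCoeff, map_natCast]
    exact (Nat.cast_ne_zero.mpr (by omega)).isUnit
  exact (Ideal.unit_mul_mem_iff_mem _ hunit).mp hminor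

theorem jacExt_monomialIdeal (b : Fin m → ℕ) :
    jacExt (#{j | b j = 1} + 1) (monomialIdeal b) = monomialIdeal (predUnlessOne ∘ b) := by
  apply le_antisymm
  · rw [jacExt]
    split_ifs
    · exact monomialIdeal_le_monomialIdeal_predUnlessOne b
    · refine sup_le (monomialIdeal_le_monomialIdeal_predUnlessOne b) (Ideal.span_le.mpr ?_)
      rintro _ ⟨φ, hφ, col, hcol, rfl⟩
      exact det_jacobian_mem_monomialIdeal_predUnlessOne (by omega) φ hφ col hcol.injective
  · refine Ideal.span_le.mpr ?_
    rintro _ ⟨j, hj, rfl⟩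
    have hj : b j ≠ 0 := predUnlessOne_eq_zero_iff.not.mp hj
    by_cases h : b j = 1
    · exact le_jacExt _ _ (X_pow_mem_monomialIdeal hj (by simp [predUnlessOne, h]))
    · have h' : predUnlessOne (b j) = b j - 1 := if_neg h
      simpa [h'] using X_pow_pred_mem_jacExt (b := b) (j := j) (by omega)

end Jacobian

section ThomBoardman

variable {m : ℕ}

theorem TBiter_monomialIdeal (b : Fin m → ℕ) (p : ℕ) :
    TBiter (monomialIdeal b) p = monomialIdeal (predUnlessOne^[p] ∘ b) := by
  induction p with
  | zero => rfl
  | succ p ih =>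
    rw [TBiter, ih, jacExtUpper_corankIdeal, rankIdeal_monomialIdeal, jacExt_monomialIdeal,
      Function.iterate_succ', Function.comp_assoc]

theorem TB_monomialIdeal (b : Fin m → ℕ) (p : ℕ) :
    TB (monomialIdeal b) p = #{j | predUnlessOne^[p] (b j) ≠ 1} := by
  rw [TB, TBiter_monomialIdeal, corankIdeal, rankIdeal_monomialIdeal]
  have := card_filter_add_card_filter_not (s := univ) (fun j => (predUnlessOne^[p] ∘ b) j = 1)
  simp only [Function.comp_apply, card_univ, Fintype.card_fin, ← ne_eq] at this ⊢
  omega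

end ThomBoardman

open Classical in
noncomputable def realizingExponent (s : ℕ → ℕ) (j : ℕ) : ℕ :=
  if h : ∃ p, s p ≤ j then Nat.find h + 1 else 0

theorem predUnlessOne_iterate_realizingExponent_eq_one_iff {s : ℕ → ℕ} (hs : Antitone s)
    (p j : ℕ) : predUnlessOne^[p] (realizingExponent s j) = 1 ↔ s p ≤ j := by
  unfold realizingExponent
  split_ifs with h
  · rw [predUnlessOne_iterate_succ, Nat.add_eq_right, Nat.sub_eq_zero_iff_le, Nat.find_le_iff]
    exact ⟨fun ⟨q, hq, hsq⟩ => (hs hq).trans hsq, fun hp => ⟨p, le_rfl, hp⟩⟩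
  · push Not at h
    simp [Function.iterate_fixed (show predUnlessOne 0 = 0 from rfl), h p]

/-- **Realization of arbitrary non-increasing sequences.** Every non-increasing sequence of
nonnegative integers is the Thom–Boardman symbol of some map-germ: for every `s : ℕ → ℕ`
with `s (p+1) ≤ s p` for all `p`, there are `m` and a proper ideal `J ⊆ 𝒜 m` whose
Thom–Boardman symbol is `s`. -/
theorem exists_ideal_with_tb (s : ℕ → ℕ) (hs : ∀ p : ℕ, s (p + 1) ≤ s p) :
    ∃ (m : ℕ) (J : Ideal (Amod m)), J ≠ ⊤ ∧ ∀ p : ℕ, TB J p = s p := by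
  have hanti : Antitone s := antitone_nat_of_succ_le hs
  refine ⟨s 0, monomialIdeal fun j => realizingExponent s j, monomialIdeal_ne_top _,
    fun p => ?_⟩
  simp only [TB_monomialIdeal, ne_eq, predUnlessOne_iterate_realizingExponent_eq_one_iff hanti,
    not_le]
  rw [Fin.card_filter_val_lt, min_eq_right (hanti (Nat.zero_le p))]
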